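/- Let F ∈ 𝓘 with supp F ⊂ (θL, θH), let Q be an F-ICC allocation, and fix θ* ∈ [θL_F, θH_F). If either (strong condition) ∫_{(θ*, θH]} κ'(Q(θ)) dF(θ) ≤ (1 − F(θ*))·θ* or (weak condition) ∫_{[θ*, θH]} κ'(Q(θ)) dF(θ) ≤ (1 − F₋(θ*))·θ*, then κ'(Q(θ*)) < θ*. Moreover, the strong condition implies the weak condition. -/

import Mathlib

open MeasureTheory Set Filter

/-- A cumulative distribution function on `[θL, θH]`. -/
structure CDF (θL θH : ℝ) where
  toFun : ℝ → ℝ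
  mono : Monotone toFun
  right_continuous : ∀ x, ContinuousWithinAt toFun (Set.Ici x) x
  eq_zero : ∀ x, x < θL → toFun x = 0
  eq_one : ∀ x, θH ≤ x → toFun x = 1

namespace CDF

variable {θL θH : ℝ}

/-- The Stieltjes function associated with a CDF. -/
noncomputable def stieltjes (F : CDF θL θH) : StieltjesFunction ℝ :=
  ⟨F.toFun, F.mono, F.right_continuous⟩

/-- The Lebesgue–Stieltjes measure of a CDF. -/
noncomputable def meas (F : CDF θL θH) : Measure ℝ := F.stieltjes.measure

/-- The integral `∫ φ dF`. -/
noncomputable def integ (F : CDF θL θH) (φ : ℝ → ℝ) : ℝ := ∫ θ, φ θ ∂F.meas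

/-- The support of the distribution with CDF `F`. -/
def supp (F : CDF θL θH) : Set ℝ :=
  {x | ∀ ε > 0, 0 < F.toFun (x + ε) - F.toFun (x - ε)}

/-- The left limit `F₋`. -/
noncomputable def leftLim (F : CDF θL θH) (x : ℝ) : ℝ := Function.leftLim F.toFun x

/-- The mean `∫ θ dF(θ)`. -/
noncomputable def mean (F : CDF θL θH) : ℝ := F.integ (fun θ => θ)

end CDF

/-- `I_F(θ) = ∫_{θL}^{θ} (F₀(t) − F(t)) dt`. -/
noncomputable def IFun {θL θH : ℝ} (F₀ F : CDF θL θH) (θ : ℝ) : ℝ :=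
  ∫ t in θL..θ, (F₀.toFun t - F.toFun t)

/-- `F ∈ 𝓘`: `F` is a feasible signal given the prior `F₀`. -/
def IsSignal {θL θH : ℝ} (F₀ F : CDF θL θH) : Prop :=
  (∀ θ ∈ Set.Icc θL θH, 0 ≤ IFun F₀ F θ) ∧ IFun F₀ F θH = 0

/-- The prior's support contains both endpoints. -/
def IsPrior {θL θH : ℝ} (F₀ : CDF θL θH) : Prop :=
  θL ∈ F₀.supp ∧ θH ∈ F₀.supp

/-- Assumptions on the information-cost function `c` (with derivatives `c'`, `c''`). -/
structure CostAssumptions (θL θH θ₀ : ℝ) (c c' c'' : ℝ → ℝ) : Prop where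
  cont : ContinuousOn c (Set.Icc θL θH)
  nonneg : ∀ θ ∈ Set.Icc θL θH, 0 ≤ c θ
  hasDeriv : ∀ θ ∈ Set.Ioo θL θH, HasDerivAt c (c' θ) θ
  hasDeriv2 : ∀ θ ∈ Set.Ioo θL θH, HasDerivAt c' (c'' θ) θ
  cont2 : ContinuousOn c'' (Set.Ioo θL θH)
  pos2 : ∀ θ ∈ Set.Ioo θL θH, 0 < c'' θ
  minAt : ∀ θ ∈ Set.Icc θL θH, c θ₀ ≤ c θ
  slopeBot : Filter.Tendsto c' (nhdsWithin θL (Set.Ioi θL)) Filter.atBot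
  slopeTop : Filter.Tendsto c' (nhdsWithin θH (Set.Iio θH)) Filter.atTop

/-- Assumptions on the production-cost function `κ` (with derivative `κ'`). -/
structure KappaAssumptions (θL θH qbar : ℝ) (κ κ' : ℝ → ℝ) : Prop where
  hasDeriv : ∀ q ∈ Set.Icc (0:ℝ) qbar, HasDerivWithinAt κ (κ' q) (Set.Icc 0 qbar) q
  contDeriv : ContinuousOn κ' (Set.Icc 0 qbar)
  strictMono : StrictMonoOn κ (Set.Icc 0 qbar)
  strictConvex : StrictConvexOn ℝ (Set.Icc 0 qbar) κ
  zero : κ 0 = 0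
  nonneg : ∀ q ∈ Set.Icc (0:ℝ) qbar, 0 ≤ κ q
  derivZero : κ' 0 ≤ θL
  derivTop : θH < κ' qbar

/-- An allocation: a nondecreasing map from types into `[0, q̄]`. -/
def IsAllocation (θL θH qbar : ℝ) (Q : ℝ → ℝ) : Prop :=
  MonotoneOn Q (Set.Icc θL θH) ∧ ∀ θ ∈ Set.Icc θL θH, Q θ ∈ Set.Icc 0 qbar

/-- The buyer's value `V_{Q,ū}(θ) = ū + ∫_{θL}^{θ} Q(t) dt`. -/
noncomputable def Vfun (θL : ℝ) (Q : ℝ → ℝ) (u θ : ℝ) : ℝ :=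
  u + ∫ t in θL..θ, Q t

/-- The mechanism `(Q, ū)` is `F`-incentive compatible. -/
def IsIC {θL θH : ℝ} (F₀ : CDF θL θH) (c : ℝ → ℝ) (Q : ℝ → ℝ) (u : ℝ)
    (F : CDF θL θH) : Prop :=
  IsSignal F₀ F ∧
  ∀ F' : CDF θL θH, IsSignal F₀ F' →
    F'.integ (fun θ => Vfun θL Q u θ - c θ) ≤ F.integ (fun θ => Vfun θL Q u θ - c θ)

/-- The monopolist's per-report profit `π_{Q,ū}(θ)`. -/
noncomputable def profit (θL : ℝ) (κ Q : ℝ → ℝ) (u θ : ℝ) : ℝ :=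
  θ * Q θ - Vfun θL Q u θ - κ (Q θ)

/-- `(Q, F)` is monopolist-optimal. -/
def MonopolistOptimal {θL θH : ℝ} (qbar : ℝ) (F₀ : CDF θL θH) (c κ : ℝ → ℝ)
    (Q : ℝ → ℝ) (F : CDF θL θH) : Prop :=
  IsAllocation θL θH qbar Q ∧ IsIC F₀ c Q 0 F ∧
  ∀ (Q' : ℝ → ℝ) (u' : ℝ) (F' : CDF θL θH),
    IsAllocation θL θH qbar Q' → 0 ≤ u' → IsIC F₀ c Q' u' F' →
    F'.integ (profit θL κ Q' u') ≤ F.integ (profit θL κ Q 0)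

/-- `P` is an `F`-shadow price. -/
def IsShadowPrice {θL θH : ℝ} (F₀ F : CDF θL θH) (P : ℝ → ℝ) : Prop :=
  (∃ K : NNReal, LipschitzOnWith K P (Set.Icc θL θH)) ∧
  ConvexOn ℝ (Set.Icc θL θH) P ∧
  ∀ a b : ℝ, Set.Ioo a b ⊆ {θ | θ ∈ Set.Icc θL θH ∧ 0 < IFun F₀ F θ} →
    ∃ m k : ℝ, ∀ θ ∈ Set.Ioo a b, P θ = m * θ + k

/-- `P` is an `F`-shadow price for `φ`. -/
def IsShadowPriceFor {θL θH : ℝ} (F₀ F : CDF θL θH) (φ P : ℝ → ℝ) : Prop :=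
  IsShadowPrice F₀ F P ∧ (∀ θ ∈ Set.Icc θL θH, φ θ ≤ P θ) ∧
  ∀ θ ∈ F.supp, P θ = φ θ

/-- `θL_F`, the minimum of the support of `F`. -/
noncomputable def thetaLF {θL θH : ℝ} (F : CDF θL θH) : ℝ := sInf F.supp

/-- `θH_F`, the maximum of the support of `F`. -/
noncomputable def thetaHF {θL θH : ℝ} (F : CDF θL θH) : ℝ := sSup F.supp

/-- `p` is an `F`-shadow derivative. -/
def IsShadowDeriv {θL θH : ℝ} (qbar : ℝ) (F₀ : CDF θL θH) (c' : ℝ → ℝ)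
    (F : CDF θL θH) (p : ℝ → ℝ) : Prop :=
  (∃ M : ℝ, ∀ θ ∈ Set.Icc θL θH, |p θ| ≤ M) ∧
  MonotoneOn p (Set.Icc θL θH) ∧
  (∀ a b : ℝ, Set.Ioo a b ⊆ {θ | θ ∈ Set.Icc θL θH ∧ 0 < IFun F₀ F θ} →
    ∀ x ∈ Set.Ioo a b, ∀ y ∈ Set.Ioo a b, p x = p y) ∧
  -c' (thetaLF F) ≤ p (thetaLF F) ∧
  p (thetaHF F) ≤ qbar - c' (thetaHF F)

/-- The allocation `Q^p` induced by a shadow derivative `p`. -/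
noncomputable def inducedAlloc {θL θH : ℝ} (qbar : ℝ) (c' : ℝ → ℝ)
    (F : CDF θL θH) (p : ℝ → ℝ) (θ : ℝ) : ℝ :=
  if θ < thetaLF F then max (p (thetaLF F) + c' θ) 0
  else if θ ≤ thetaHF F then p θ + c' θ
  else min (p (thetaHF F) + c' θ) qbar

/-- `Q` is `F`-information-cost-canceling. -/
def IsICC {θL θH : ℝ} (qbar : ℝ) (F₀ : CDF θL θH) (c' : ℝ → ℝ)
    (F : CDF θL θH) (Q : ℝ → ℝ) : Prop :=
  ∃ p : ℝ → ℝ, IsShadowDeriv qbar F₀ c' F p ∧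
    ∀ θ ∈ Set.Icc θL θH, Q θ = inducedAlloc qbar c' F p θ

/-- `φ` satisfies edge irrelevance: some maximizer over CDFs with the prior mean has
support in the open interval. -/
def EdgeIrrelevant {θL θH : ℝ} (F₀ : CDF θL θH) (φ : ℝ → ℝ) : Prop :=
  ∃ F' : CDF θL θH, F'.mean = F₀.mean ∧
    (∀ G : CDF θL θH, G.mean = F₀.mean → G.integ φ ≤ F'.integ φ) ∧
    F'.supp ⊆ Set.Ioo θL θH

/-- `θH_Q = inf {θ : Q(θ) = Q(θH)}`. -/
noncomputable def thetaHQ (θL θH : ℝ) (Q : ℝ → ℝ) : ℝ :=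
  sInf {θ | θ ∈ Set.Icc θL θH ∧ Q θ = Q θH}

/-- `θL_Q = sup {θ : Q(θ) = Q(θL)}`. -/
noncomputable def thetaLQ (θL θH : ℝ) (Q : ℝ → ℝ) : ℝ :=
  sSup {θ | θ ∈ Set.Icc θL θH ∧ Q θ = Q θL}

/-- The support of a (cumulative distribution) function `G : ℝ → ℝ`. -/
def suppOfFun (G : ℝ → ℝ) : Set ℝ := {x | ∀ ε > 0, 0 < G (x + ε) - G (x - ε)}

/-- The conditional CDF `F(·|θ ∈ [a, b])`. -/
noncomputable def condFun {θL θH : ℝ} (F : CDF θL θH) (a b θ : ℝ) : ℝ :=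
  if θ < a then 0
  else (F.toFun (min θ b) - F.leftLim a) / (F.toFun b - F.leftLim a)


/-!
On `[θs, θH_F]` the allocation is `Q = p + c'` with `p` nondecreasing and `c'` strictly
increasing, so `κ' ∘ Q` is strictly increasing there, while `F` puts no mass above `θH_F`
and positive mass on `(θs, θH_F]` because `θH_F` is the top of the support. Hence on either
integration domain the `F`-average of `κ' ∘ Q` strictly exceeds `κ' (Q θs)`, and the condition
forces `κ' (Q θs) < θs`. The strong condition implies the weak one because the two integrals
differ only by the atom `(F θs - F₋ θs) · κ' (Q θs)`, which is at most `(F θs - F₋ θs) · θs`.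
-/

theorem StrictConvexOn.strictMonoOn_of_hasDerivWithinAt {S : Set ℝ} {f f' : ℝ → ℝ}
    (hf : StrictConvexOn ℝ S f) (hf' : ∀ x ∈ S, HasDerivWithinAt f (f' x) S x) :
    StrictMonoOn f' S := fun x hx y hy hxy =>
  (hf.lt_slope_of_hasDerivWithinAt hx hy hxy (hf' x hx)).trans
    (hf.slope_lt_of_hasDerivWithinAt hx hy hxy (hf' y hy))

theorem measureReal_mul_lt_setIntegral {α : Type*} [MeasurableSpace α] {μ : Measure α}
    {s : Set α} {f : α → ℝ} {a : ℝ} (hs : MeasurableSet s) (hμs : μ s ≠ ⊤)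
    (hf : IntegrableOn f s μ) (hle : ∀ x ∈ s, a ≤ f x) (hlt : 0 < μ {x ∈ s | a < f x}) :
    μ.real s * a < ∫ x in s, f x ∂μ := by
  have hpos : 0 < ∫ x in s, (f x - a) ∂μ := by
    rw [setIntegral_pos_iff_support_of_nonneg_ae
      (ae_restrict_of_forall_mem hs fun x hx => sub_nonneg.2 (hle x hx))
      (hf.sub (integrableOn_const hμs))]
    exact hlt.trans_le (measure_mono fun x hx => ⟨sub_ne_zero.2 hx.2.ne', hx.1⟩)
  rw [integral_sub hf (integrableOn_const hμs), setIntegral_const, smul_eq_mul] at hpos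
  linarith

theorem lt_of_setIntegral_le_of_strictMonoOn {μ : Measure ℝ} [IsFiniteMeasureOnCompacts μ]
    {f : ℝ → ℝ} {s : Set ℝ} {a b c : ℝ} (hs : MeasurableSet s) (hIoc : Ioc a b ⊆ s)
    (hIcc : s ⊆ Icc a b) (hf : StrictMonoOn f (Icc a b)) (hpos : 0 < μ (Ioc a b))
    (h : ∫ x in s, f x ∂μ ≤ μ.real s * c) : f a < c := by
  have hlt : μ.real s * f a < μ.real s * c := by
    refine (measureReal_mul_lt_setIntegral hs
      (measure_mono hIcc |>.trans_lt isCompact_Icc.measure_lt_top).ne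
      ((hf.monotoneOn.integrableOn_isCompact isCompact_Icc).mono_set hIcc) ?_ ?_).trans_le h
    · intro x hx
      have hx := hIcc hx
      exact hf.monotoneOn ⟨le_rfl, hx.1.trans hx.2⟩ hx hx.1
    · refine hpos.trans_le (measure_mono fun x hx => ⟨hIoc hx, ?_⟩)
      exact hf ⟨le_rfl, hx.1.le.trans hx.2⟩ (Ioc_subset_Icc_self hx) hx.1
  exact lt_of_mul_lt_mul_left hlt measureReal_nonneg

theorem setIntegral_Icc_eq_add_setIntegral_Ioc {μ : Measure ℝ} {f : ℝ → ℝ} {a b : ℝ}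
    (hab : a ≤ b) (hf : IntegrableOn f (Icc a b) μ) :
    ∫ x in Icc a b, f x ∂μ = μ.real {a} * f a + ∫ x in Ioc a b, f x ∂μ := by
  rw [← Ioc_union_left hab, setIntegral_union (by simp) (measurableSet_singleton a)
    (hf.mono_set Ioc_subset_Icc_self) (hf.mono_set (by simp [hab])), integral_singleton,
    smul_eq_mul, add_comm]

namespace CDF

variable {θL θH : ℝ} (F : CDF θL θH)

instance : IsLocallyFiniteMeasure F.meas :=
  F.stieltjes.instIsLocallyFiniteMeasure

theorem meas_Ioc (a b : ℝ) : F.meas (Ioc a b) = ENNReal.ofReal (F.toFun b - F.toFun a) :=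
  F.stieltjes.measure_Ioc a b

theorem measureReal_Ioc {a b : ℝ} (hab : a ≤ b) :
    F.meas.real (Ioc a b) = F.toFun b - F.toFun a := by
  rw [measureReal_def, meas_Ioc, ENNReal.toReal_ofReal (sub_nonneg.2 (F.mono hab))]

theorem leftLim_le (a : ℝ) : F.leftLim a ≤ F.toFun a :=
  F.mono.leftLim_le le_rfl

theorem measureReal_Icc {a b : ℝ} (hab : a ≤ b) :
    F.meas.real (Icc a b) = F.toFun b - F.leftLim a := by
  rw [measureReal_def, meas, F.stieltjes.measure_Icc]
  exact ENNReal.toReal_ofReal (sub_nonneg.2 ((F.leftLim_le a).trans (F.mono hab)))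

theorem measureReal_singleton (a : ℝ) : F.meas.real {a} = F.toFun a - F.leftLim a := by
  rw [measureReal_def, meas, F.stieltjes.measure_singleton]
  exact ENNReal.toReal_ofReal (sub_nonneg.2 (F.leftLim_le a))

theorem isClosed_supp : IsClosed F.supp := by
  rw [← isOpen_compl_iff, Metric.isOpen_iff]
  intro x hx
  simp only [supp, mem_compl_iff, mem_ofPred_eq, not_forall, not_lt] at hx
  obtain ⟨ε, hε, hle⟩ := hx
  refine ⟨ε / 2, by positivity, fun y hy => ?_⟩
  rw [Metric.mem_ball, Real.dist_eq, abs_lt] at hy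
  simp only [supp, mem_compl_iff, mem_ofPred_eq, not_forall, not_lt]
  refine ⟨ε / 2, by positivity, ?_⟩
  linarith [F.mono (show y + ε / 2 ≤ x + ε by linarith),
    F.mono (show x - ε ≤ y - ε / 2 by linarith)]

theorem meas_compl_supp : F.meas F.suppᶜ = 0 := by
  refine measure_null_of_locally_null _ fun x hx => ?_
  simp only [supp, mem_compl_iff, mem_ofPred_eq, not_forall, not_lt] at hx
  obtain ⟨ε, hε, hle⟩ := hx
  refine ⟨Ioo (x - ε) (x + ε), mem_nhdsWithin_of_mem_nhds (Ioo_mem_nhds (by linarith)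
    (by linarith)), measure_mono_null Ioo_subset_Ioc_self ?_⟩
  rw [meas_Ioc, ENNReal.ofReal_eq_zero]
  exact hle

theorem supp_nonempty_of_thetaLF_lt (h : thetaLF F < thetaHF F) : F.supp.Nonempty := by
  by_contra hne
  rw [not_nonempty_iff_eq_empty] at hne
  simp [thetaLF, thetaHF, hne] at h

variable {F}

theorem thetaLF_mem_supp (hsupp : F.supp ⊆ Ioo θL θH) (hne : F.supp.Nonempty) :
    thetaLF F ∈ F.supp :=
  F.isClosed_supp.csInf_mem hne ⟨θL, fun _ hx => (hsupp hx).1.le⟩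

theorem thetaHF_mem_supp (hsupp : F.supp ⊆ Ioo θL θH) (hne : F.supp.Nonempty) :
    thetaHF F ∈ F.supp :=
  F.isClosed_supp.csSup_mem hne ⟨θH, fun _ hx => (hsupp hx).2.le⟩

theorem inter_Iic_thetaHF_ae_eq (hbdd : BddAbove F.supp) (s : Set ℝ) :
    (s ∩ Iic (thetaHF F) : Set ℝ) =ᵐ[F.meas] s :=
  inter_ae_eq_left_of_ae_eq_univ <| ae_eq_univ.2 <|
    measure_mono_null (compl_subset_compl.2 fun _ hx => le_csSup hbdd hx) F.meas_compl_supp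

theorem meas_Ioc_thetaHF_pos (hbdd : BddAbove F.supp) (hHF : thetaHF F ∈ F.supp) {a : ℝ}
    (ha : a < thetaHF F) : 0 < F.meas (Ioc a (thetaHF F)) := by
  set x := thetaHF F
  -- the neighbourhood `(a, 2x - a]` of `x ∈ supp F` has positive mass, none of it right of `x`
  have hpos : 0 < F.meas (Ioc a (x + (x - a))) := by
    rw [meas_Ioc, ENNReal.ofReal_pos]
    simpa using hHF (x - a) (sub_pos.2 ha)
  calc 0 < F.meas (Ioc a (x + (x - a))) := hpos
    _ ≤ F.meas (Ioc a x ∪ F.suppᶜ) := measure_mono fun y hy =>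
        (le_or_gt y x).imp (fun hyx => ⟨hy.1, hyx⟩) fun hxy hys => (le_csSup hbdd hys).not_gt hxy
    _ ≤ F.meas (Ioc a x) := by
        simpa [F.meas_compl_supp] using measure_union_le (μ := F.meas) (Ioc a x) F.suppᶜ

end CDF

theorem CostAssumptions.strictMonoOn_deriv {θL θH θ₀ : ℝ} {c c' c'' : ℝ → ℝ}
    (hc : CostAssumptions θL θH θ₀ c c' c'') : StrictMonoOn c' (Ioo θL θH) :=
  strictMonoOn_of_hasDerivWithinAt_pos (convex_Ioo θL θH)
    (fun x hx => (hc.hasDeriv2 x hx).continuousAt.continuousWithinAt)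
    (fun x hx => (hc.hasDeriv2 x (interior_subset hx)).hasDerivWithinAt)
    (fun x hx => hc.pos2 x (interior_subset hx))

theorem KappaAssumptions.strictMonoOn_deriv {θL θH qbar : ℝ} {κ κ' : ℝ → ℝ}
    (hκ : KappaAssumptions θL θH qbar κ κ') : StrictMonoOn κ' (Icc 0 qbar) :=
  hκ.strictConvex.strictMonoOn_of_hasDerivWithinAt hκ.hasDeriv

theorem inducedAlloc_of_mem_Icc {θL θH qbar : ℝ} {c' p : ℝ → ℝ} {F : CDF θL θH} {θ : ℝ}
    (hθ : θ ∈ Icc (thetaLF F) (thetaHF F)) : inducedAlloc qbar c' F p θ = p θ + c' θ := by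
  rw [inducedAlloc, if_neg hθ.1.not_gt, if_pos hθ.2]

namespace IsICC

variable {θL θH qbar : ℝ} {F₀ F : CDF θL θH} {c' Q : ℝ → ℝ}

theorem exists_eqOn (hQ : IsICC qbar F₀ c' F Q)
    (hF : Icc (thetaLF F) (thetaHF F) ⊆ Icc θL θH) :
    ∃ p, IsShadowDeriv qbar F₀ c' F p ∧ EqOn Q (p + c') (Icc (thetaLF F) (thetaHF F)) := by
  obtain ⟨p, hp, hQp⟩ := hQ
  exact ⟨p, hp, fun θ hθ => (hQp θ (hF hθ)).trans (inducedAlloc_of_mem_Icc hθ)⟩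

theorem strictMonoOn (hQ : IsICC qbar F₀ c' F Q) (hc' : StrictMonoOn c' (Ioo θL θH))
    (hF : Icc (thetaLF F) (thetaHF F) ⊆ Ioo θL θH) :
    StrictMonoOn Q (Icc (thetaLF F) (thetaHF F)) := by
  obtain ⟨p, ⟨-, hp, -⟩, hQp⟩ := hQ.exists_eqOn (hF.trans Ioo_subset_Icc_self)
  intro x hx y hy hxy
  rw [hQp hx, hQp hy]
  exact add_lt_add_of_le_of_lt
    (hp (Ioo_subset_Icc_self (hF hx)) (Ioo_subset_Icc_self (hF hy)) hxy.le)
    (hc' (hF hx) (hF hy) hxy)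

theorem mapsTo (hQ : IsICC qbar F₀ c' F Q) (hc' : StrictMonoOn c' (Ioo θL θH))
    (hF : Icc (thetaLF F) (thetaHF F) ⊆ Ioo θL θH) (hLH : thetaLF F ≤ thetaHF F) :
    MapsTo Q (Icc (thetaLF F) (thetaHF F)) (Icc 0 qbar) := by
  obtain ⟨p, ⟨-, -, -, hpL, hpH⟩, hQp⟩ := hQ.exists_eqOn (hF.trans Ioo_subset_Icc_self)
  have hmono := (hQ.strictMonoOn hc' hF).monotoneOn
  have hL := hQp (left_mem_Icc.2 hLH)
  have hH := hQp (right_mem_Icc.2 hLH)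
  simp only [Pi.add_apply] at hL hH
  intro θ hθ
  constructor
  · linarith [hmono (left_mem_Icc.2 hLH) hθ hθ.1]
  · linarith [hmono hθ (right_mem_Icc.2 hLH) hθ.2]

end IsICC

theorem statement17_general {θL θH : ℝ}
    (F₀ : CDF θL θH)
    (c c' c'' : ℝ → ℝ) (hc : CostAssumptions θL θH F₀.mean c c' c'')
    (qbar : ℝ)
    (κ κ' : ℝ → ℝ) (hκ : KappaAssumptions θL θH qbar κ κ')
    (F : CDF θL θH) (hsupp : F.supp ⊆ Set.Ioo θL θH)
    (Q : ℝ → ℝ) (hICC : IsICC qbar F₀ c' F Q)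
    (θs : ℝ) (hθs : θs ∈ Set.Ico (thetaLF F) (thetaHF F)) :
    ((∫ θ in Set.Ioc θs θH, κ' (Q θ) ∂F.meas) ≤ (1 - F.toFun θs) * θs →
      (∫ θ in Set.Icc θs θH, κ' (Q θ) ∂F.meas) ≤ (1 - F.leftLim θs) * θs) ∧
    (((∫ θ in Set.Ioc θs θH, κ' (Q θ) ∂F.meas) ≤ (1 - F.toFun θs) * θs ∨
      (∫ θ in Set.Icc θs θH, κ' (Q θ) ∂F.meas) ≤ (1 - F.leftLim θs) * θs) →
      κ' (Q θs) < θs) := by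
  have hne := F.supp_nonempty_of_thetaLF_lt (hθs.1.trans_lt hθs.2)
  have hbdd : BddAbove F.supp := ⟨θH, fun _ hx => (hsupp hx).2.le⟩
  have hHF := CDF.thetaHF_mem_supp hsupp hne
  have hIoo : Icc (thetaLF F) (thetaHF F) ⊆ Ioo θL θH := fun x hx =>
    ⟨(hsupp (CDF.thetaLF_mem_supp hsupp hne)).1.trans_le hx.1, hx.2.trans_lt (hsupp hHF).2⟩
  have hθsH : θs ≤ θH := hθs.2.le.trans (hsupp hHF).2.le
  have hmono : StrictMonoOn (fun θ => κ' (Q θ)) (Icc θs (thetaHF F)) :=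
    (hκ.strictMonoOn_deriv.comp (hICC.strictMonoOn hc.strictMonoOn_deriv hIoo)
      (hICC.mapsTo hc.strictMonoOn_deriv hIoo (hθs.1.trans hθs.2.le))).mono
      (Icc_subset_Icc_left hθs.1)
  have hae := F.inter_Iic_thetaHF_ae_eq hbdd
  have key : ∀ S, MeasurableSet S → Ioc θs θH ⊆ S → S ⊆ Icc θs θH →
      ∫ θ in S, κ' (Q θ) ∂F.meas ≤ F.meas.real S * θs → κ' (Q θs) < θs := by
    intro S hS hIocS hSIcc h
    rw [← setIntegral_congr_set (hae S), ← measureReal_congr (hae S)] at h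
    exact lt_of_setIntegral_le_of_strictMonoOn (f := fun θ => κ' (Q θ)) (hS.inter measurableSet_Iic)
      (fun x hx => ⟨hIocS (Ioc_subset_Ioc_right (hsupp hHF).2.le hx), hx.2⟩)
      (fun x hx => ⟨(hSIcc hx.1).1, hx.2⟩) hmono (F.meas_Ioc_thetaHF_pos hbdd hHF hθs.2) h
  have hF1 : F.toFun θH = 1 := F.eq_one θH le_rfl
  have hstrong (h : ∫ θ in Ioc θs θH, κ' (Q θ) ∂F.meas ≤ (1 - F.toFun θs) * θs) :
      κ' (Q θs) < θs :=
    key _ measurableSet_Ioc subset_rfl Ioc_subset_Icc_self (by rwa [F.measureReal_Ioc hθsH, hF1])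
  have hweak (h : ∫ θ in Icc θs θH, κ' (Q θ) ∂F.meas ≤ (1 - F.leftLim θs) * θs) :
      κ' (Q θs) < θs :=
    key _ measurableSet_Icc Ioc_subset_Icc_self subset_rfl (by rwa [F.measureReal_Icc hθsH, hF1])
  refine ⟨fun h => ?_, fun h => h.elim hstrong hweak⟩
  have hint : IntegrableOn (fun θ => κ' (Q θ)) (Icc θs θH) F.meas :=
    ((hmono.monotoneOn.integrableOn_isCompact isCompact_Icc).mono_set
      fun x hx => ⟨hx.1.1, hx.2⟩).congr_set_ae (hae _).symm
  rw [setIntegral_Icc_eq_add_setIntegral_Ioc hθsH hint, F.measureReal_singleton]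
  have hatom := mul_le_mul_of_nonneg_left (hstrong h).le (sub_nonneg.2 (F.leftLim_le θs))
  linarith

theorem statement17 {θL θH : ℝ} (hθL : 0 ≤ θL) (hθ : θL < θH)
    (F₀ : CDF θL θH) (hF₀ : IsPrior F₀)
    (c c' c'' : ℝ → ℝ) (hc : CostAssumptions θL θH F₀.mean c c' c'')
    (qbar : ℝ) (hqbar : 0 < qbar)
    (κ κ' : ℝ → ℝ) (hκ : KappaAssumptions θL θH qbar κ κ')
    (F : CDF θL θH) (hF : IsSignal F₀ F) (hsupp : F.supp ⊆ Set.Ioo θL θH)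
    (Q : ℝ → ℝ) (hICC : IsICC qbar F₀ c' F Q)
    (θs : ℝ) (hθs : θs ∈ Set.Ico (thetaLF F) (thetaHF F)) :
    ((∫ θ in Set.Ioc θs θH, κ' (Q θ) ∂F.meas) ≤ (1 - F.toFun θs) * θs →
      (∫ θ in Set.Icc θs θH, κ' (Q θ) ∂F.meas) ≤ (1 - F.leftLim θs) * θs) ∧
    (((∫ θ in Set.Ioc θs θH, κ' (Q θ) ∂F.meas) ≤ (1 - F.toFun θs) * θs ∨
      (∫ θ in Set.Icc θs θH, κ' (Q θ) ∂F.meas) ≤ (1 - F.leftLim θs) * θs) →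
      κ' (Q θs) < θs) :=
  statement17_general F₀ c c' c'' hc qbar κ κ' hκ F hsupp Q hICC θs hθs
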